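/- arXiv:2508.08055 — 6 statements merged into one kernel-verified Lean document; each statement's English description precedes it below -/
import Mathlib

section
/- For n = 2 agents, if f : V² → [0,1] is anonymous and BIC, then p_1 · c_2^+(f) − (1−p_1) · c_2^-(f) ≤ p_1², where p_1 = P(ṽ_1 > 0) and c_2^+(f), c_2^-(f) are agent 2's constant interim acceptance probabilities on positive and negative reports respectively. -/
open Finset

/-- Lemma 2, first bound: for two agents, if `f` is anonymous and has
constant interim acceptance probabilities `c₂⁺, c₂⁻` for agent 2, then
`p₁ c₂⁺ − (1−p₁) c₂⁻ ≤ p₁²` where `p₁ = P(ṽ₁ > 0)`. -/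
theorem stmt6 (V : Finset ℝ) (hV0 : (0 : ℝ) ∉ V)
    (G1 G2 : ℝ → ℝ)
    (hG1 : (∀ x, 0 ≤ G1 x) ∧ ∑ x ∈ V, G1 x = 1)
    (hG2 : (∀ x, 0 ≤ G2 x) ∧ ∑ x ∈ V, G2 x = 1)
    (hm1 : (∃ x ∈ V, 0 < x ∧ 0 < G1 x) ∧ (∃ x ∈ V, x < 0 ∧ 0 < G1 x))
    (hm2 : (∃ x ∈ V, 0 < x ∧ 0 < G2 x) ∧ (∃ x ∈ V, x < 0 ∧ 0 < G2 x))
    (f : ℝ → ℝ → ℝ) (hf01 : ∀ x y, 0 ≤ f x y ∧ f x y ≤ 1)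
    (hsym : ∀ x y, f x y = f y x)
    (cp2 cm2 : ℝ)
    (hcm2 : ∀ y ∈ V, y < 0 → (∑ x ∈ V, G1 x * f x y) = cm2)
    (hcp2 : ∀ y ∈ V, 0 < y → (∑ x ∈ V, G1 x * f x y) = cp2)
    (p1 : ℝ) (hp1 : p1 = ∑ x ∈ V.filter (fun x => 0 < x), G1 x) :
    p1 * cp2 - (1 - p1) * cm2 ≤ p1 ^ 2 := by
  classical
  obtain ⟨hG1nn, hG1sum⟩ := hG1
  set P := V.filter (fun x => 0 < x) with hP
  set N := V.filter (fun x => x < 0) with hN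
  have hVeq : V = P ∪ N := by
    ext x
    simp only [hP, hN, mem_union, mem_filter]
    constructor
    · intro hx
      rcases lt_trichotomy 0 x with h | h | h
      · exact Or.inl ⟨hx, h⟩
      · exact absurd (h ▸ hx) hV0
      · exact Or.inr ⟨hx, h⟩
    · rintro (⟨h, _⟩ | ⟨h, _⟩) <;> exact h
  have hdisj : Disjoint P N := by
    rw [Finset.disjoint_left]
    intro x hx hx'
    simp only [hP, hN, mem_filter] at hx hx'
    linarith [hx.2, hx'.2]
  have h1mp : (1 : ℝ) - p1 = ∑ y ∈ N, G1 y := by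
    rw [hp1, ← hG1sum, hVeq, Finset.sum_union hdisj]; ring
  have e1 : p1 * cp2 = ∑ y ∈ P, ∑ x ∈ V, G1 y * (G1 x * f x y) := by
    rw [hp1, Finset.sum_mul]
    refine Finset.sum_congr rfl fun y hy => ?_
    simp only [hP, mem_filter] at hy
    rw [← hcp2 y hy.1 hy.2, Finset.mul_sum]
  have e2 : (1 - p1) * cm2 = ∑ y ∈ N, ∑ x ∈ V, G1 y * (G1 x * f x y) := by
    rw [h1mp, Finset.sum_mul]
    refine Finset.sum_congr rfl fun y hy => ?_
    simp only [hN, mem_filter] at hy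
    rw [← hcm2 y hy.1 hy.2, Finset.mul_sum]
  have esplit : ∀ (S : Finset ℝ),
      ∑ y ∈ S, ∑ x ∈ V, G1 y * (G1 x * f x y)
        = (∑ y ∈ S, ∑ x ∈ P, G1 y * (G1 x * f x y))
          + ∑ y ∈ S, ∑ x ∈ N, G1 y * (G1 x * f x y) := by
    intro S
    rw [← Finset.sum_add_distrib]
    refine Finset.sum_congr rfl fun y _ => ?_
    rw [hVeq, Finset.sum_union hdisj]
  have hcross : ∑ y ∈ P, ∑ x ∈ N, G1 y * (G1 x * f x y)
      = ∑ y ∈ N, ∑ x ∈ P, G1 y * (G1 x * f x y) := by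
    rw [Finset.sum_comm]
    refine Finset.sum_congr rfl fun x _ => Finset.sum_congr rfl fun y _ => ?_
    rw [hsym]; ring
  have hDnn : 0 ≤ ∑ y ∈ N, ∑ x ∈ N, G1 y * (G1 x * f x y) := by
    refine Finset.sum_nonneg fun y _ => Finset.sum_nonneg fun x _ => ?_
    exact mul_nonneg (hG1nn y) (mul_nonneg (hG1nn x) (hf01 x y).1)
  have hAle : ∑ y ∈ P, ∑ x ∈ P, G1 y * (G1 x * f x y) ≤ p1 ^ 2 := by
    have : ∑ y ∈ P, ∑ x ∈ P, G1 y * (G1 x * f x y)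
        ≤ ∑ y ∈ P, ∑ x ∈ P, G1 y * G1 x := by
      refine Finset.sum_le_sum fun y _ => Finset.sum_le_sum fun x _ => ?_
      have h1 := (hf01 x y).2
      have := mul_le_of_le_one_right (hG1nn x) h1
      nlinarith [hG1nn y, hG1nn x]
    calc ∑ y ∈ P, ∑ x ∈ P, G1 y * (G1 x * f x y)
        ≤ ∑ y ∈ P, ∑ x ∈ P, G1 y * G1 x := this
      _ = p1 ^ 2 := by
          rw [hp1]
          simp only [← Finset.mul_sum, ← Finset.sum_mul]
          ring
  rw [e1, e2, esplit P, esplit N, hcross]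
  linarith
end

section
/- Consider the linear program: maximize p_1 U_1^+ c_1^+ − (1−p_1) U_1^- c_1^- + p_2 U_2^+ c_2^+ − (1−p_2) U_2^- c_2^- over (c_1^+, c_1^-, c_2^+, c_2^-) ∈ [0,1]^4 subject to p_1 c_2^+ − (1−p_1) c_2^- ≤ p_1², p_2 c_1^+ − (1−p_2) c_1^- ≤ p_2², and p_1 c_1^+ + (1−p_1) c_1^- = p_2 c_2^+ + (1−p_2) c_2^-. Then at least one of the two points (c_1^+, c_1^-, c_2^+, c_2^-) = (1, p_2, 1, p_1) or (p_2, 0, p_1, 0) is an optimal solution. -/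
set_option maxHeartbeats 1000000


/-- Objective of the auxiliary linear program (AUX). -/
def auxObj (p1 p2 U1p U1m U2p U2m c1p c1m c2p c2m : ℝ) : ℝ :=
  p1 * U1p * c1p - (1 - p1) * U1m * c1m + p2 * U2p * c2p - (1 - p2) * U2m * c2m

/-- Feasible set of the auxiliary linear program (AUX). -/
def auxFeasible (p1 p2 c1p c1m c2p c2m : ℝ) : Prop :=
  0 ≤ c1p ∧ c1p ≤ 1 ∧ 0 ≤ c1m ∧ c1m ≤ 1 ∧ 0 ≤ c2p ∧ c2p ≤ 1 ∧ 0 ≤ c2m ∧ c2m ≤ 1 ∧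
  p1 * c2p - (1 - p1) * c2m ≤ p1 ^ 2 ∧
  p2 * c1p - (1 - p2) * c1m ≤ p2 ^ 2 ∧
  p1 * c1p + (1 - p1) * c1m = p2 * c2p + (1 - p2) * c2m

lemma key (p1 p2 U1p U1m U2p U2m c1p c1m c2p c2m : ℝ)
    (hp1a : 0 < p1) (hp1b : p1 < 1) (hp2a : 0 < p2) (hp2b : p2 < 1)
    (hU1p : 0 < U1p) (hU1m : 0 < U1m) (hU2p : 0 < U2p) (hU2m : 0 < U2m)
    (h : auxFeasible p1 p2 c1p c1m c2p c2m) :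
    auxObj p1 p2 U1p U1m U2p U2m c1p c1m c2p c2m ≤
      max (auxObj p1 p2 U1p U1m U2p U2m 1 p2 1 p1)
          (auxObj p1 p2 U1p U1m U2p U2m p2 0 p1 0) := by
  obtain ⟨ha0, ha1, hb0, hb1, hc0, hc1, hd0, hd1, hA, hB, hC⟩ := h
  have h1p1 : (0:ℝ) < 1 - p1 := by linarith
  have h1p2 : (0:ℝ) < 1 - p2 := by linarith
  simp only [auxObj]
  rcases le_or_gt (p1*c1p + (1-p1)*c1m) (p1*p2) with hT | hT
  · -- f ≤ v2
    refine le_trans ?_ (le_max_right _ _)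
    have H1 : 0 ≤ p2 * (c1m * (p1*(1-p1)*(U1p+U1m))) :=
      mul_nonneg hp2a.le (mul_nonneg hb0 (mul_nonneg (mul_nonneg hp1a.le h1p1.le) (by linarith)))
    have H2 : 0 ≤ p1 * (c2m * (p2*(1-p2)*(U2p+U2m))) :=
      mul_nonneg hp1a.le (mul_nonneg hd0 (mul_nonneg (mul_nonneg hp2a.le h1p2.le) (by linarith)))
    have H3 : 0 ≤ (p1*p2 - (p1*c1p+(1-p1)*c1m)) * (p2*(p1*U1p) + p1*(p2*U2p)) :=
      mul_nonneg (by linarith) (by nlinarith [mul_pos hp1a (mul_pos hp2a hU2p), mul_pos hp2a (mul_pos hp1a hU1p)])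
    have H4 : p1*(p2*U2p)*(p1*c1p+(1-p1)*c1m) = p1*(p2*U2p)*(p2*c2p+(1-p2)*c2m) := by
      rw [hC]
    have hkey : 0 ≤ p1*p2*((p1 * U1p * p2 - (1 - p1) * U1m * 0 + p2 * U2p * p1 - (1 - p2) * U2m * 0) -
        (p1 * U1p * c1p - (1 - p1) * U1m * c1m + p2 * U2p * c2p - (1 - p2) * U2m * c2m)) := by
      linarith [H1, H2, H3, H4]
    nlinarith [hkey, mul_pos hp1a hp2a]
  rcases le_or_gt (p1+p2-p1*p2) (p1*c1p + (1-p1)*c1m) with hT2 | hT2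
  · -- f ≤ v1
    refine le_trans ?_ (le_max_left _ _)
    have H1 : 0 ≤ (1-p2) * ((1 - c1p) * ((1-p1)*(p1*U1p) + (1-p1)*U1m*p1)) :=
      mul_nonneg h1p2.le (mul_nonneg (by linarith) (by nlinarith [mul_pos h1p1 (mul_pos hp1a hU1p), mul_pos h1p1 (mul_pos hU1m hp1a)]))
    have H2 : 0 ≤ (1-p1) * ((1 - c2p) * ((1-p2)*(p2*U2p) + (1-p2)*U2m*p2)) :=
      mul_nonneg h1p1.le (mul_nonneg (by linarith) (by nlinarith [mul_pos h1p2 (mul_pos hp2a hU2p), mul_pos h1p2 (mul_pos hU2m hp2a)]))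
    have H3 : 0 ≤ ((p1*c1p+(1-p1)*c1m) - (p1+p2-p1*p2)) * ((1-p1)*U1m*(1-p2) + (1-p2)*U2m*(1-p1)) :=
      mul_nonneg (by linarith) (by nlinarith [mul_pos (mul_pos h1p1 hU1m) h1p2, mul_pos (mul_pos h1p2 hU2m) h1p1])
    have H4 : (1-p1)*((1-p2)*U2m)*(p1*c1p+(1-p1)*c1m) = (1-p1)*((1-p2)*U2m)*(p2*c2p+(1-p2)*c2m) := by
      rw [hC]
    have hkey : 0 ≤ (1-p1)*(1-p2)*((p1 * U1p * 1 - (1 - p1) * U1m * p2 + p2 * U2p * 1 - (1 - p2) * U2m * p1) -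
        (p1 * U1p * c1p - (1 - p1) * U1m * c1m + p2 * U2p * c2p - (1 - p2) * U2m * c2m)) := by
      linarith [H1, H2, H3, H4]
    nlinarith [hkey, mul_pos h1p1 h1p2]
  · -- middle case
    have hD : (0:ℝ) < p1+p2-2*(p1*p2) := by linarith [mul_pos hp1a h1p2, mul_pos hp2a h1p1]
    have H1 : 0 ≤ (p1*U1p*(1-p1) + (1-p1)*U1m*p1) * (p2^2 - (p2*c1p - (1-p2)*c1m)) :=
      mul_nonneg (by nlinarith [mul_pos (mul_pos hp1a hU1p) h1p1, mul_pos (mul_pos h1p1 hU1m) hp1a, mul_pos (mul_pos hp2a hU2p) h1p2, mul_pos (mul_pos h1p2 hU2m) hp2a]) (by linarith)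
    have H2 : 0 ≤ (p2*U2p*(1-p2) + (1-p2)*U2m*p2) * (p1^2 - (p1*c2p - (1-p1)*c2m)) :=
      mul_nonneg (by nlinarith [mul_pos (mul_pos hp1a hU1p) h1p1, mul_pos (mul_pos h1p1 hU1m) hp1a, mul_pos (mul_pos hp2a hU2p) h1p2, mul_pos (mul_pos h1p2 hU2m) hp2a]) (by linarith)
    have H4 : (p2*U2p*(1-p1) - (1-p2)*U2m*p1)*(p1*c1p+(1-p1)*c1m) =
        (p2*U2p*(1-p1) - (1-p2)*U2m*p1)*(p2*c2p+(1-p2)*c2m) := by rw [hC]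
    rcases le_or_gt 0 (p1*U1p*(1-p2) - (1-p1)*U1m*p2 + p2*U2p*(1-p1) - (1-p2)*U2m*p1) with hM | hM
    · refine le_trans ?_ (le_max_left _ _)
      have H3 : 0 ≤ (p1*U1p*(1-p2) - (1-p1)*U1m*p2 + p2*U2p*(1-p1) - (1-p2)*U2m*p1) *
          ((p1+p2-p1*p2) - (p1*c1p+(1-p1)*c1m)) := mul_nonneg hM (by linarith)
      have hkey : 0 ≤ (p1+p2-2*(p1*p2))*((p1 * U1p * 1 - (1 - p1) * U1m * p2 + p2 * U2p * 1 - (1 - p2) * U2m * p1) -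
          (p1 * U1p * c1p - (1 - p1) * U1m * c1m + p2 * U2p * c2p - (1 - p2) * U2m * c2m)) := by
        linarith [H1, H2, H3, H4]
      nlinarith [hkey, hD]
    · refine le_trans ?_ (le_max_right _ _)
      have H3 : 0 ≤ (-(p1*U1p*(1-p2) - (1-p1)*U1m*p2 + p2*U2p*(1-p1) - (1-p2)*U2m*p1)) *
          ((p1*c1p+(1-p1)*c1m) - p1*p2) := mul_nonneg (by linarith) (by linarith)
      have hkey : 0 ≤ (p1+p2-2*(p1*p2))*((p1 * U1p * p2 - (1 - p1) * U1m * 0 + p2 * U2p * p1 - (1 - p2) * U2m * 0) -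
          (p1 * U1p * c1p - (1 - p1) * U1m * c1m + p2 * U2p * c2p - (1 - p2) * U2m * c2m)) := by
        linarith [H1, H2, H3, H4]
      nlinarith [hkey, hD]

/-- Lemma 3: at least one of the two points
`(c₁⁺,c₁⁻,c₂⁺,c₂⁻) = (1, p₂, 1, p₁)` or `(p₂, 0, p₁, 0)` solves (AUX). -/
theorem stmt8 (p1 p2 U1p U1m U2p U2m : ℝ)
    (hp1 : 0 < p1 ∧ p1 < 1) (hp2 : 0 < p2 ∧ p2 < 1)
    (hU : 0 < U1p ∧ 0 < U1m ∧ 0 < U2p ∧ 0 < U2m) :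
    (auxFeasible p1 p2 1 p2 1 p1 ∧
      ∀ c1p c1m c2p c2m : ℝ, auxFeasible p1 p2 c1p c1m c2p c2m →
        auxObj p1 p2 U1p U1m U2p U2m c1p c1m c2p c2m ≤
          auxObj p1 p2 U1p U1m U2p U2m 1 p2 1 p1) ∨
    (auxFeasible p1 p2 p2 0 p1 0 ∧
      ∀ c1p c1m c2p c2m : ℝ, auxFeasible p1 p2 c1p c1m c2p c2m →
        auxObj p1 p2 U1p U1m U2p U2m c1p c1m c2p c2m ≤
          auxObj p1 p2 U1p U1m U2p U2m p2 0 p1 0) := by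
  obtain ⟨hp1a, hp1b⟩ := hp1
  obtain ⟨hp2a, hp2b⟩ := hp2
  obtain ⟨hU1p, hU1m, hU2p, hU2m⟩ := hU
  have feas1 : auxFeasible p1 p2 1 p2 1 p1 :=
    ⟨by norm_num, le_refl 1, hp2a.le, hp2b.le, by norm_num, le_refl 1, hp1a.le, hp1b.le,
      le_of_eq (by ring), le_of_eq (by ring), by ring⟩
  have feas2 : auxFeasible p1 p2 p2 0 p1 0 :=
    ⟨hp2a.le, hp2b.le, le_refl 0, by norm_num, hp1a.le, hp1b.le, le_refl 0, by norm_num,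
      le_of_eq (by ring), le_of_eq (by ring), by ring⟩
  rcases le_total (auxObj p1 p2 U1p U1m U2p U2m 1 p2 1 p1)
      (auxObj p1 p2 U1p U1m U2p U2m p2 0 p1 0) with hle | hle
  · right
    refine ⟨feas2, fun a b c d hf => ?_⟩
    exact (key p1 p2 U1p U1m U2p U2m a b c d hp1a hp1b hp2a hp2b hU1p hU1m hU2p hU2m hf).trans
      (le_of_eq (max_eq_right hle))
  · left
    refine ⟨feas1, fun a b c d hf => ?_⟩
    exact (key p1 p2 U1p U1m U2p U2m a b c d hp1a hp1b hp2a hp2b hU1p hU1m hU2p hU2m hf).trans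
      (le_of_eq (max_eq_left hle))
end

section
/- In the linear program of the previous context, any optimal solution satisfies both inequality constraints p_1 c_2^+ − (1−p_1) c_2^- ≤ p_1² and p_2 c_1^+ − (1−p_2) c_1^- ≤ p_2² with equality. -/
set_option maxHeartbeats 800000


lemma auxFeasible_swap {p1 p2 c1p c1m c2p c2m : ℝ}
    (h : auxFeasible p1 p2 c1p c1m c2p c2m) :
    auxFeasible p2 p1 c2p c2m c1p c1m := by
  obtain ⟨f1, f2, f3, f4, f5, f6, f7, f8, fA, fB, fE⟩ := h
  exact ⟨f5, f6, f7, f8, f1, f2, f3, f4, fB, fA, fE.symm⟩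

lemma auxObj_swap (p1 p2 U1p U1m U2p U2m c1p c1m c2p c2m : ℝ) :
    auxObj p1 p2 U1p U1m U2p U2m c1p c1m c2p c2m
      = auxObj p2 p1 U2p U2m U1p U1m c2p c2m c1p c1m := by
  unfold auxObj; ring

/-- Inner move in group 1: if constraint B is slack, `c1p < 1` and `0 < c1m`,
we can increase `c1p` and decrease `c1m` keeping the equality, improving. -/
lemma move_inner (p1 p2 U1p U1m U2p U2m c1p c1m c2p c2m : ℝ)
    (hp1a : 0 < p1) (hp1b : p1 < 1) (hp2a : 0 < p2) (hp2b : p2 < 1)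
    (hU1p : 0 < U1p) (hU1m : 0 < U1m)
    (hfeas : auxFeasible p1 p2 c1p c1m c2p c2m)
    (hopt : ∀ d1p d1m d2p d2m : ℝ, auxFeasible p1 p2 d1p d1m d2p d2m →
      auxObj p1 p2 U1p U1m U2p U2m d1p d1m d2p d2m ≤
        auxObj p1 p2 U1p U1m U2p U2m c1p c1m c2p c2m)
    (hB : p2 * c1p - (1 - p2) * c1m < p2 ^ 2)
    (h1 : c1p < 1) (h2 : 0 < c1m) : False := by
  obtain ⟨f1, f2, f3, f4, f5, f6, f7, f8, fA, fB, fE⟩ := hfeas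
  set s := (p2 ^ 2 - (p2 * c1p - (1 - p2) * c1m)) / (p2 * (1 - p1) + (1 - p2) * p1) with hs
  set ε := min (min s ((1 - c1p) / (1 - p1))) (c1m / p1) with hε
  have hden : 0 < p2 * (1 - p1) + (1 - p2) * p1 := by nlinarith
  have hεpos : 0 < ε := by
    apply lt_min
    · exact lt_min (div_pos (by linarith) hden) (div_pos (by linarith) (by linarith))
    · exact div_pos h2 hp1a
  have e1 : ε * (p2 * (1 - p1) + (1 - p2) * p1) ≤ p2 ^ 2 - (p2 * c1p - (1 - p2) * c1m) :=
    (le_div_iff₀ hden).mp (le_trans (min_le_left _ _) (min_le_left _ _))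
  have e2 : ε * (1 - p1) ≤ 1 - c1p :=
    (le_div_iff₀ (by linarith)).mp (le_trans (min_le_left _ _) (min_le_right _ _))
  have e3 : ε * p1 ≤ c1m := (le_div_iff₀ hp1a).mp (min_le_right _ _)
  clear_value ε
  have hf : auxFeasible p1 p2 (c1p + (1 - p1) * ε) (c1m - p1 * ε) c2p c2m := by
    refine ⟨by nlinarith, by nlinarith, by nlinarith, by nlinarith, f5, f6, f7, f8,
      fA, by nlinarith, by linear_combination fE⟩
  have hlt : auxObj p1 p2 U1p U1m U2p U2m c1p c1m c2p c2m <
      auxObj p1 p2 U1p U1m U2p U2m (c1p + (1 - p1) * ε) (c1m - p1 * ε) c2p c2m := by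
    unfold auxObj
    nlinarith [mul_pos (mul_pos (mul_pos hp1a hU1p) (by linarith : (0:ℝ) < 1 - p1)) hεpos,
      mul_pos (mul_pos (mul_pos (by linarith : (0:ℝ) < 1 - p1) hU1m) hp1a) hεpos]
  exact absurd (hopt _ _ _ _ hf) (not_le.mpr hlt)

/-- Decreasing move: if both constraints A and B are slack and both `c1m, c2m`
are positive, decrease both, improving. -/
lemma move_dec (p1 p2 U1p U1m U2p U2m c1p c1m c2p c2m : ℝ)
    (hp1a : 0 < p1) (hp1b : p1 < 1) (hp2a : 0 < p2) (hp2b : p2 < 1)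
    (hU1m : 0 < U1m) (hU2m : 0 < U2m)
    (hfeas : auxFeasible p1 p2 c1p c1m c2p c2m)
    (hopt : ∀ d1p d1m d2p d2m : ℝ, auxFeasible p1 p2 d1p d1m d2p d2m →
      auxObj p1 p2 U1p U1m U2p U2m d1p d1m d2p d2m ≤
        auxObj p1 p2 U1p U1m U2p U2m c1p c1m c2p c2m)
    (hA : p1 * c2p - (1 - p1) * c2m < p1 ^ 2)
    (hB : p2 * c1p - (1 - p2) * c1m < p2 ^ 2)
    (h1 : 0 < c1m) (h2 : 0 < c2m) : False := by
  obtain ⟨f1, f2, f3, f4, f5, f6, f7, f8, fA, fB, fE⟩ := hfeas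
  set ε := min (min ((p2 ^ 2 - (p2 * c1p - (1 - p2) * c1m)) / (1 - p2) ^ 2)
      ((p1 ^ 2 - (p1 * c2p - (1 - p1) * c2m)) / (1 - p1) ^ 2))
      (min (c1m / (1 - p2)) (c2m / (1 - p1))) with hε
  have h1p : (0:ℝ) < 1 - p1 := by linarith
  have h2p : (0:ℝ) < 1 - p2 := by linarith
  have hεpos : 0 < ε := by
    apply lt_min
    · exact lt_min (div_pos (by linarith) (by positivity)) (div_pos (by linarith) (by positivity))
    · exact lt_min (div_pos h1 h2p) (div_pos h2 h1p)
  have e1 : ε * (1 - p2) ^ 2 ≤ p2 ^ 2 - (p2 * c1p - (1 - p2) * c1m) :=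
    (le_div_iff₀ (by positivity)).mp (le_trans (min_le_left _ _) (min_le_left _ _))
  have e2 : ε * (1 - p1) ^ 2 ≤ p1 ^ 2 - (p1 * c2p - (1 - p1) * c2m) :=
    (le_div_iff₀ (by positivity)).mp (le_trans (min_le_left _ _) (min_le_right _ _))
  have e3 : ε * (1 - p2) ≤ c1m :=
    (le_div_iff₀ h2p).mp (le_trans (min_le_right _ _) (min_le_left _ _))
  have e4 : ε * (1 - p1) ≤ c2m :=
    (le_div_iff₀ h1p).mp (le_trans (min_le_right _ _) (min_le_right _ _))
  clear_value ε
  have hf : auxFeasible p1 p2 c1p (c1m - (1 - p2) * ε) c2p (c2m - (1 - p1) * ε) := by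
    refine ⟨f1, f2, by nlinarith, by nlinarith, f5, f6, by nlinarith, by nlinarith,
      by nlinarith, by nlinarith, by linear_combination fE⟩
  have hlt : auxObj p1 p2 U1p U1m U2p U2m c1p c1m c2p c2m <
      auxObj p1 p2 U1p U1m U2p U2m c1p (c1m - (1 - p2) * ε) c2p (c2m - (1 - p1) * ε) := by
    unfold auxObj
    nlinarith [mul_pos (mul_pos (mul_pos h1p hU1m) h2p) hεpos,
      mul_pos (mul_pos (mul_pos h2p hU2m) h1p) hεpos]
  exact absurd (hopt _ _ _ _ hf) (not_le.mpr hlt)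

/-- Increasing move: if both constraints A and B are slack and both `c1p, c2p`
are below 1, increase both, improving. -/
lemma move_inc (p1 p2 U1p U1m U2p U2m c1p c1m c2p c2m : ℝ)
    (hp1a : 0 < p1) (hp1b : p1 < 1) (hp2a : 0 < p2) (hp2b : p2 < 1)
    (hU1p : 0 < U1p) (hU2p : 0 < U2p)
    (hfeas : auxFeasible p1 p2 c1p c1m c2p c2m)
    (hopt : ∀ d1p d1m d2p d2m : ℝ, auxFeasible p1 p2 d1p d1m d2p d2m →
      auxObj p1 p2 U1p U1m U2p U2m d1p d1m d2p d2m ≤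
        auxObj p1 p2 U1p U1m U2p U2m c1p c1m c2p c2m)
    (hA : p1 * c2p - (1 - p1) * c2m < p1 ^ 2)
    (hB : p2 * c1p - (1 - p2) * c1m < p2 ^ 2)
    (h1 : c1p < 1) (h2 : c2p < 1) : False := by
  obtain ⟨f1, f2, f3, f4, f5, f6, f7, f8, fA, fB, fE⟩ := hfeas
  set ε := min (min ((p2 ^ 2 - (p2 * c1p - (1 - p2) * c1m)) / p2 ^ 2)
      ((p1 ^ 2 - (p1 * c2p - (1 - p1) * c2m)) / p1 ^ 2))
      (min ((1 - c1p) / p2) ((1 - c2p) / p1)) with hε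
  have hεpos : 0 < ε := by
    apply lt_min
    · exact lt_min (div_pos (by linarith) (by positivity)) (div_pos (by linarith) (by positivity))
    · exact lt_min (div_pos (by linarith) hp2a) (div_pos (by linarith) hp1a)
  have e1 : ε * p2 ^ 2 ≤ p2 ^ 2 - (p2 * c1p - (1 - p2) * c1m) :=
    (le_div_iff₀ (by positivity)).mp (le_trans (min_le_left _ _) (min_le_left _ _))
  have e2 : ε * p1 ^ 2 ≤ p1 ^ 2 - (p1 * c2p - (1 - p1) * c2m) :=
    (le_div_iff₀ (by positivity)).mp (le_trans (min_le_left _ _) (min_le_right _ _))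
  have e3 : ε * p2 ≤ 1 - c1p :=
    (le_div_iff₀ hp2a).mp (le_trans (min_le_right _ _) (min_le_left _ _))
  have e4 : ε * p1 ≤ 1 - c2p :=
    (le_div_iff₀ hp1a).mp (le_trans (min_le_right _ _) (min_le_right _ _))
  clear_value ε
  have hf : auxFeasible p1 p2 (c1p + p2 * ε) c1m (c2p + p1 * ε) c2m := by
    refine ⟨by nlinarith, by nlinarith, f3, f4, by nlinarith, by nlinarith, f7, f8,
      by nlinarith, by nlinarith, by linear_combination fE⟩
  have hlt : auxObj p1 p2 U1p U1m U2p U2m c1p c1m c2p c2m <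
      auxObj p1 p2 U1p U1m U2p U2m (c1p + p2 * ε) c1m (c2p + p1 * ε) c2m := by
    unfold auxObj
    nlinarith [mul_pos (mul_pos (mul_pos hp1a hU1p) hp2a) hεpos,
      mul_pos (mul_pos (mul_pos hp2a hU2p) hp1a) hεpos]
  exact absurd (hopt _ _ _ _ hf) (not_le.mpr hlt)

/-- At an optimum, constraint B (`p2 c1p - (1-p2) c1m ≤ p2²`) is tight. -/
lemma tightB (p1 p2 U1p U1m U2p U2m : ℝ)
    (hp1a : 0 < p1) (hp1b : p1 < 1) (hp2a : 0 < p2) (hp2b : p2 < 1)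
    (hU1p : 0 < U1p) (hU1m : 0 < U1m) (hU2p : 0 < U2p) (hU2m : 0 < U2m)
    (c1p c1m c2p c2m : ℝ) (hfeas : auxFeasible p1 p2 c1p c1m c2p c2m)
    (hopt : ∀ d1p d1m d2p d2m : ℝ, auxFeasible p1 p2 d1p d1m d2p d2m →
      auxObj p1 p2 U1p U1m U2p U2m d1p d1m d2p d2m ≤
        auxObj p1 p2 U1p U1m U2p U2m c1p c1m c2p c2m) :
    p2 * c1p - (1 - p2) * c1m = p2 ^ 2 := by
  by_contra hne
  obtain ⟨f1, f2, f3, f4, f5, f6, f7, f8, fA, fB, fE⟩ := hfeas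
  have hB : p2 * c1p - (1 - p2) * c1m < p2 ^ 2 := lt_of_le_of_ne fB hne
  have hfeas' : auxFeasible p1 p2 c1p c1m c2p c2m :=
    ⟨f1, f2, f3, f4, f5, f6, f7, f8, fA, fB, fE⟩
  rcases eq_or_lt_of_le f3 with h1m | h1m
  · -- c1m = 0
    have hc1p : c1p < p2 := by nlinarith
    rcases lt_or_eq_of_le f6 with h2p | h2p
    · -- c2p < 1
      rcases lt_or_eq_of_le fA with hA | hA
      · exact move_inc p1 p2 U1p U1m U2p U2m c1p c1m c2p c2m hp1a hp1b hp2a hp2b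
          hU1p hU2p hfeas' hopt hA hB (by linarith) h2p
      · -- A tight: c2p ≥ p1, contradiction via equalities
        have hc2p : p1 ≤ c2p := by nlinarith
        nlinarith [fE, hA, mul_le_mul_of_nonneg_left hc2p (le_of_lt hp2a),
          mul_lt_mul_of_pos_left hc1p hp1a]
    · -- c2p = 1
      nlinarith [fE]
  · -- 0 < c1m
    rcases lt_or_eq_of_le f2 with h1p | h1p
    · exact move_inner p1 p2 U1p U1m U2p U2m c1p c1m c2p c2m hp1a hp1b hp2a hp2b
        hU1p hU1m hfeas' hopt hB h1p h1m
    · -- c1p = 1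
      have hc1m : p2 < c1m := by nlinarith
      rcases eq_or_lt_of_le f7 with h2m | h2m
      · -- c2m = 0
        nlinarith [fE]
      · rcases lt_or_eq_of_le fA with hA | hA
        · exact move_dec p1 p2 U1p U1m U2p U2m c1p c1m c2p c2m hp1a hp1b hp2a hp2b
            hU1m hU2m hfeas' hopt hA hB h1m h2m
        · -- A tight
          have hc2m : c2m ≤ p1 := by nlinarith
          nlinarith [fE, hA, mul_lt_mul_of_pos_left hc1m (by linarith : (0:ℝ) < 1 - p1),
            mul_le_mul_of_nonneg_left hc2m (by linarith : (0:ℝ) ≤ 1 - p2),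
            mul_le_mul_of_nonneg_left f6 (le_of_lt hp2a)]

/-- any optimal solution of (AUX) satisfies both inequality
constraints with equality. -/
theorem stmt9 (p1 p2 U1p U1m U2p U2m : ℝ)
    (hp1 : 0 < p1 ∧ p1 < 1) (hp2 : 0 < p2 ∧ p2 < 1)
    (hU : 0 < U1p ∧ 0 < U1m ∧ 0 < U2p ∧ 0 < U2m)
    (c1p c1m c2p c2m : ℝ) (hfeas : auxFeasible p1 p2 c1p c1m c2p c2m)
    (hopt : ∀ d1p d1m d2p d2m : ℝ, auxFeasible p1 p2 d1p d1m d2p d2m →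
      auxObj p1 p2 U1p U1m U2p U2m d1p d1m d2p d2m ≤
        auxObj p1 p2 U1p U1m U2p U2m c1p c1m c2p c2m) :
    p1 * c2p - (1 - p1) * c2m = p1 ^ 2 ∧
    p2 * c1p - (1 - p2) * c1m = p2 ^ 2 := by
  obtain ⟨hp1a, hp1b⟩ := hp1
  obtain ⟨hp2a, hp2b⟩ := hp2
  obtain ⟨hU1p, hU1m, hU2p, hU2m⟩ := hU
  constructor
  · -- swap the two groups and apply tightB
    have hopt' : ∀ d2p d2m d1p d1m : ℝ, auxFeasible p2 p1 d2p d2m d1p d1m →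
        auxObj p2 p1 U2p U2m U1p U1m d2p d2m d1p d1m ≤
          auxObj p2 p1 U2p U2m U1p U1m c2p c2m c1p c1m := by
      intro d2p d2m d1p d1m hd
      have h := hopt d1p d1m d2p d2m (auxFeasible_swap hd)
      rw [auxObj_swap p1 p2 U1p U1m U2p U2m d1p d1m d2p d2m,
        auxObj_swap p1 p2 U1p U1m U2p U2m c1p c1m c2p c2m] at h
      exact h
    exact tightB p2 p1 U2p U2m U1p U1m hp2a hp2b hp1a hp1b hU2p hU2m hU1p hU1m
      c2p c2m c1p c1m (auxFeasible_swap hfeas) hopt'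
  · exact tightB p1 p2 U1p U1m U2p U2m hp1a hp1b hp2a hp2b hU1p hU1m hU2p hU2m
      c1p c1m c2p c2m hfeas hopt
end

section
/- For n = 2 agents with independent values on a common finite support V ⊂ ℝ \ {0}, the maximum expected welfare over all anonymous BIC social choice functions is attained by either the qualified majority rule f^(1) (reform iff at least one agent has positive value) or f^(2) (reform iff both agents have positive values). -/
/-!
Incentive compatibility forces each agent's interim reform probability to take one value `A⁺` on
positive and one value `A⁻` on negative types, so welfare is linear in these four numbers,
increasing in the `A⁺` and decreasing in the `A⁻`. Counting the reform probability over the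
quadrants of the type space under the priors `G₁ × G₂`, and, thanks to anonymity, also under
`G₁ × G₁` and `G₂ × G₂`, gives four linear constraints between them. They say exactly that for a
suitable `s ∈ [0, 1]` the interim profile of `f` is dominated by that of the lottery
`s f⁽¹⁾ + (1 - s) f⁽²⁾`, whence `W(f) ≤ s W(f⁽¹⁾) + (1 - s) W(f⁽²⁾) ≤ max (W(f⁽¹⁾), W(f⁽²⁾))`.
-/

open Finset

/-- Interim reform probability for agent 1 reporting `x` (two agents). -/
noncomputable def interim1 (V : Finset ℝ) (G2 : ℝ → ℝ) (f : ℝ → ℝ → ℝ) (x : ℝ) : ℝ :=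
  ∑ y ∈ V, G2 y * f x y

/-- Interim reform probability for agent 2 reporting `y` (two agents). -/
noncomputable def interim2 (V : Finset ℝ) (G1 : ℝ → ℝ) (f : ℝ → ℝ → ℝ) (y : ℝ) : ℝ :=
  ∑ x ∈ V, G1 x * f x y

/-- BIC for two agents. -/
def BIC2 (V : Finset ℝ) (G1 G2 : ℝ → ℝ) (f : ℝ → ℝ → ℝ) : Prop :=
  (∀ x ∈ V, ∀ x' ∈ V, x * interim1 V G2 f x' ≤ x * interim1 V G2 f x) ∧
  (∀ y ∈ V, ∀ y' ∈ V, y * interim2 V G1 f y' ≤ y * interim2 V G1 f y)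

/-- Expected welfare with two agents. -/
noncomputable def welfare2 (V : Finset ℝ) (G1 G2 : ℝ → ℝ) (f : ℝ → ℝ → ℝ) : ℝ :=
  ∑ x ∈ V, ∑ y ∈ V, G1 x * G2 y * (f x y * (x + y))

/-- Qualified majority rule `f⁽¹⁾`: reform iff at least one positive value. -/
noncomputable def qmr1 (x y : ℝ) : ℝ := if 0 < x ∨ 0 < y then 1 else 0

/-- Qualified majority rule `f⁽²⁾`: reform iff both values positive. -/
noncomputable def qmr2 (x y : ℝ) : ℝ := if 0 < x ∧ 0 < y then 1 else 0

def ConstOnSigns (V : Finset ℝ) (g : ℝ → ℝ) (a b : ℝ) : Prop :=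
  ∀ x ∈ V, g x = if 0 < x then a else b

section Interim

variable {V : Finset ℝ}

section ConstOnSigns

variable {g : ℝ → ℝ} {a b : ℝ}

theorem ConstOnSigns.sum_mul_pos (h : ConstOnSigns V g a b) (c : ℝ → ℝ) :
    ∑ x ∈ V with 0 < x, c x * g x = (∑ x ∈ V with 0 < x, c x) * a := by
  rw [sum_mul]
  refine sum_congr rfl fun x hx => ?_
  obtain ⟨hxV, hx0⟩ := mem_filter.1 hx
  rw [h x hxV, if_pos hx0]

theorem ConstOnSigns.sum_mul_nonpos (h : ConstOnSigns V g a b) (c : ℝ → ℝ) :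
    ∑ x ∈ V with ¬0 < x, c x * g x = (∑ x ∈ V with ¬0 < x, c x) * b := by
  rw [sum_mul]
  refine sum_congr rfl fun x hx => ?_
  obtain ⟨hxV, hx0⟩ := mem_filter.1 hx
  rw [h x hxV, if_neg hx0]

theorem ConstOnSigns.sum_mul (h : ConstOnSigns V g a b) (c : ℝ → ℝ) :
    ∑ x ∈ V, c x * g x
      = (∑ x ∈ V with 0 < x, c x) * a + (∑ x ∈ V with ¬0 < x, c x) * b := by
  rw [← sum_filter_add_sum_filter_not V (0 < ·), h.sum_mul_pos, h.sum_mul_nonpos]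

end ConstOnSigns

theorem eq_of_incentive_of_mul_pos {h : ℝ → ℝ}
    (hIC : ∀ x ∈ V, ∀ x' ∈ V, x * h x' ≤ x * h x) {x x' : ℝ} (hx : x ∈ V) (hx' : x' ∈ V)
    (hxx' : 0 < x * x') : h x = h x' := by
  have h₁ := hIC x hx x' hx'
  have h₂ := hIC x' hx' x hx
  rcases pos_and_pos_or_neg_and_neg_of_mul_pos hxx' with ⟨h0, h0'⟩ | ⟨h0, h0'⟩
  · exact le_antisymm ((mul_le_mul_iff_right₀ h0').mp h₂) ((mul_le_mul_iff_right₀ h0).mp h₁)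
  · exact le_antisymm ((mul_le_mul_left_of_neg h0).mp h₁) ((mul_le_mul_left_of_neg h0').mp h₂)

theorem constOnSigns_of_incentive (hV0 : (0 : ℝ) ∉ V) {h : ℝ → ℝ}
    (hIC : ∀ x ∈ V, ∀ x' ∈ V, x * h x' ≤ x * h x) {p n : ℝ} (hp : p ∈ V) (hp0 : 0 < p)
    (hn : n ∈ V) (hn0 : n < 0) : ConstOnSigns V h (h p) (h n) := by
  intro x hx
  split_ifs with hx0
  · exact eq_of_incentive_of_mul_pos hIC hx hp (mul_pos hx0 hp0)
  · have hx0' : x < 0 := (not_lt.mp hx0).lt_of_ne (by rintro rfl; exact hV0 hx)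
    exact eq_of_incentive_of_mul_pos hIC hx hn (mul_pos_of_neg_of_neg hx0' hn0)

variable {c d : ℝ → ℝ} {f : ℝ → ℝ → ℝ}

theorem interim1_nonneg (hd : ∀ y, 0 ≤ d y) (hf : ∀ x y, 0 ≤ f x y ∧ f x y ≤ 1) (x : ℝ) :
    0 ≤ interim1 V d f x :=
  sum_nonneg fun y _ => mul_nonneg (hd y) (hf x y).1

theorem interim1_le_sum (hd : ∀ y, 0 ≤ d y) (hf : ∀ x y, 0 ≤ f x y ∧ f x y ≤ 1) (x : ℝ) :
    interim1 V d f x ≤ ∑ y ∈ V, d y :=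
  sum_le_sum fun y _ => mul_le_of_le_one_right (hd y) (hf x y).2

theorem interim2_eq_interim1 (hsym : ∀ x y, f x y = f y x) (G : ℝ → ℝ) :
    interim2 V G f = interim1 V G f := by
  ext y
  simp only [interim1, interim2, hsym _ y]

theorem sum_mul_interim1_le (p : ℝ → Prop) [DecidablePred p] (hc : ∀ x, 0 ≤ c x)
    (hd : ∀ y, 0 ≤ d y) (hf : ∀ x y, 0 ≤ f x y ∧ f x y ≤ 1) :
    ∑ x ∈ V with p x, c x * interim1 V d f x
      ≤ (∑ x ∈ V with p x, c x) * (∑ y ∈ V with p y, d y)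
        + ∑ y ∈ V with ¬p y, d y * interim2 V c f y := by
  calc ∑ x ∈ V with p x, c x * interim1 V d f x
      = ∑ x ∈ V with p x, ∑ y ∈ V with p y, c x * (d y * f x y)
        + ∑ x ∈ V with p x, ∑ y ∈ V with ¬p y, c x * (d y * f x y) := by
        simp only [interim1, ← sum_filter_add_sum_filter_not V p, mul_add, mul_sum,
          sum_add_distrib]
    _ ≤ (∑ x ∈ V with p x, c x) * (∑ y ∈ V with p y, d y)
        + ∑ y ∈ V with ¬p y, d y * interim2 V c f y := by
        gcongr ?_ + ?_
        · rw [sum_mul_sum]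
          gcongr with x _ y _
          · exact hc x
          · exact mul_le_of_le_one_right (hd y) (hf x y).2
        · rw [sum_comm]
          gcongr with y _
          simp only [interim2, mul_sum, mul_left_comm (c _)]
          exact sum_le_sum_of_subset_of_nonneg (filter_subset _ _) fun x _ _ =>
            mul_nonneg (hd y) (mul_nonneg (hc x) (hf x y).1)

theorem mul_le_of_constOnSigns (hc : ∀ x, 0 ≤ c x) (hd : ∀ y, 0 ≤ d y)
    (hf : ∀ x y, 0 ≤ f x y ∧ f x y ≤ 1) {A A' B B' : ℝ}
    (hA : ConstOnSigns V (interim1 V d f) A A') (hB : ConstOnSigns V (interim2 V c f) B' B) :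
    (∑ x ∈ V with 0 < x, c x) * A
      ≤ (∑ x ∈ V with 0 < x, c x) * (∑ y ∈ V with 0 < y, d y)
        + (∑ y ∈ V with ¬0 < y, d y) * B := by
  rw [← hA.sum_mul_pos, ← hB.sum_mul_nonpos]
  exact sum_mul_interim1_le (0 < ·) hc hd hf

end Interim

theorem welfare2_eq_sum_interim (V : Finset ℝ) (G1 G2 : ℝ → ℝ) (f : ℝ → ℝ → ℝ) :
    welfare2 V G1 G2 f
      = ∑ x ∈ V, G1 x * x * interim1 V G2 f x + ∑ y ∈ V, G2 y * y * interim2 V G1 f y := by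
  simp only [interim1, interim2, mul_sum]
  rw [sum_comm (s := V) (t := V) (f := fun y x => G2 y * y * (G1 x * f x y)),
    ← sum_add_distrib, welfare2]
  refine sum_congr rfl fun x _ => ?_
  rw [← sum_add_distrib]
  exact sum_congr rfl fun y _ => by ring

theorem welfare2_eq_of_constOnSigns {V : Finset ℝ} {G1 G2 : ℝ → ℝ} {f : ℝ → ℝ → ℝ}
    {Ap Am Bp Bm : ℝ} (hA : ConstOnSigns V (interim1 V G2 f) Ap Am)
    (hB : ConstOnSigns V (interim2 V G1 f) Bp Bm) :
    welfare2 V G1 G2 f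
      = (∑ x ∈ V with 0 < x, G1 x * x) * Ap + (∑ x ∈ V with ¬0 < x, G1 x * x) * Am
        + (∑ y ∈ V with 0 < y, G2 y * y) * Bp + (∑ y ∈ V with ¬0 < y, G2 y * y) * Bm := by
  rw [welfare2_eq_sum_interim, hA.sum_mul (fun x => G1 x * x), hB.sum_mul (fun y => G2 y * y)]
  ring

theorem constOnSigns_interim1_qmr1 (V : Finset ℝ) (G : ℝ → ℝ) :
    ConstOnSigns V (interim1 V G qmr1) (∑ y ∈ V, G y) (∑ y ∈ V with 0 < y, G y) := by
  intro x _
  split_ifs with hx <;> simp [interim1, qmr1, hx, sum_filter]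

theorem constOnSigns_interim1_qmr2 (V : Finset ℝ) (G : ℝ → ℝ) :
    ConstOnSigns V (interim1 V G qmr2) (∑ y ∈ V with 0 < y, G y) 0 := by
  intro x _
  split_ifs with hx <;> simp [interim1, qmr2, hx, sum_filter]

theorem qmr1_comm (x y : ℝ) : qmr1 x y = qmr1 y x := by
  simp only [qmr1, or_comm]

theorem qmr2_comm (x y : ℝ) : qmr2 x y = qmr2 y x := by
  simp only [qmr2, and_comm]

section Slack

variable {a₁ b₁ a₂ b₂ Ap Am Bp Bm : ℝ}

theorem exists_slack (ha₁ : 0 ≤ a₁) (hb₁ : 0 < b₁) (hab₁ : a₁ + b₁ = 1) (ha₂ : 0 ≤ a₂)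
    (hb₂ : 0 < b₂) (hab₂ : a₂ + b₂ = 1) (hAp : Ap ≤ 1) (hAm : 0 ≤ Am) (hBp : Bp ≤ 1)
    (hBm : 0 ≤ Bm) (h₁ : a₂ * Ap ≤ a₂ * a₂ + b₂ * Am) (h₂ : a₁ * Bp ≤ a₁ * a₁ + b₁ * Bm)
    (h₃ : a₁ * Ap ≤ a₁ * a₂ + b₂ * Bm) (h₄ : a₂ * Bp ≤ a₂ * a₁ + b₁ * Am) :
    ∃ s, 0 ≤ s ∧ s ≤ 1 ∧ Ap ≤ a₂ + b₂ * s ∧ Bp ≤ a₁ + b₁ * s ∧ a₂ * s ≤ Am ∧ a₁ * s ≤ Bm := by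
  -- the least `s ≥ 0` for which `Ap` and `Bp` are dominated
  set s := max 0 (max ((Ap - a₂) / b₂) ((Bp - a₁) / b₁))
  have hsA : (Ap - a₂) / b₂ ≤ s := (le_max_left _ _).trans (le_max_right _ _)
  have hsB : (Bp - a₁) / b₁ ≤ s := (le_max_right _ _).trans (le_max_right _ _)
  rw [div_le_iff₀ hb₂] at hsA
  rw [div_le_iff₀ hb₁] at hsB
  refine ⟨s, le_max_left _ _, max_le zero_le_one (max_le ?_ ?_), by linarith, by linarith, ?_, ?_⟩
  · rw [div_le_one hb₂]; linarith
  · rw [div_le_one hb₁]; linarith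
  · simp only [s, mul_max_of_nonneg _ _ ha₂, mul_zero, ← mul_div_assoc]
    refine max_le hAm (max_le ?_ ?_)
    · rw [div_le_iff₀ hb₂]; linarith
    · rw [div_le_iff₀ hb₁]; linarith
  · simp only [s, mul_max_of_nonneg _ _ ha₁, mul_zero, ← mul_div_assoc]
    refine max_le hBm (max_le ?_ ?_)
    · rw [div_le_iff₀ hb₂]; linarith
    · rw [div_le_iff₀ hb₁]; linarith

theorem le_max_of_slack {P₁ N₁ P₂ N₂ : ℝ} (hP₁ : 0 ≤ P₁) (hN₁ : N₁ ≤ 0) (hP₂ : 0 ≤ P₂)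
    (hN₂ : N₂ ≤ 0) (ha₁ : 0 ≤ a₁) (hb₁ : 0 < b₁) (hab₁ : a₁ + b₁ = 1) (ha₂ : 0 ≤ a₂)
    (hb₂ : 0 < b₂) (hab₂ : a₂ + b₂ = 1) (hAp : Ap ≤ 1) (hAm : 0 ≤ Am) (hBp : Bp ≤ 1)
    (hBm : 0 ≤ Bm) (h₁ : a₂ * Ap ≤ a₂ * a₂ + b₂ * Am) (h₂ : a₁ * Bp ≤ a₁ * a₁ + b₁ * Bm)
    (h₃ : a₁ * Ap ≤ a₁ * a₂ + b₂ * Bm) (h₄ : a₂ * Bp ≤ a₂ * a₁ + b₁ * Am) :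
    P₁ * Ap + N₁ * Am + P₂ * Bp + N₂ * Bm
      ≤ max (P₁ + N₁ * a₂ + P₂ + N₂ * a₁) (P₁ * a₂ + P₂ * a₁) := by
  obtain ⟨s, hs0, hs1, hAp', hBp', hAm', hBm'⟩ :=
    exists_slack ha₁ hb₁ hab₁ ha₂ hb₂ hab₂ hAp hAm hBp hBm h₁ h₂ h₃ h₄
  calc P₁ * Ap + N₁ * Am + P₂ * Bp + N₂ * Bm
      ≤ P₁ * (a₂ + b₂ * s) + N₁ * (a₂ * s) + P₂ * (a₁ + b₁ * s) + N₂ * (a₁ * s) := by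
        linarith [mul_le_mul_of_nonneg_left hAp' hP₁, mul_le_mul_of_nonpos_left hAm' hN₁,
          mul_le_mul_of_nonneg_left hBp' hP₂, mul_le_mul_of_nonpos_left hBm' hN₂]
    _ = s * (P₁ + N₁ * a₂ + P₂ + N₂ * a₁) + (1 - s) * (P₁ * a₂ + P₂ * a₁) := by
        rw [eq_sub_of_add_eq' hab₁, eq_sub_of_add_eq' hab₂]
        ring
    _ ≤ _ := Convex.combo_le_max _ _ hs0 (sub_nonneg.2 hs1) (add_sub_cancel _ _)

end Slack

theorem sum_filter_pos_mul_self_nonneg (V : Finset ℝ) {G : ℝ → ℝ} (hG : ∀ x, 0 ≤ G x) :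
    0 ≤ ∑ x ∈ V with 0 < x, G x * x :=
  sum_nonneg fun x hx => mul_nonneg (hG x) (mem_filter.1 hx).2.le

theorem sum_filter_not_pos_mul_self_nonpos (V : Finset ℝ) {G : ℝ → ℝ} (hG : ∀ x, 0 ≤ G x) :
    ∑ x ∈ V with ¬0 < x, G x * x ≤ 0 :=
  sum_nonpos fun x hx => mul_nonpos_of_nonneg_of_nonpos (hG x) (not_lt.1 (mem_filter.1 hx).2)

theorem sum_filter_not_pos_pos {V : Finset ℝ} {G : ℝ → ℝ} (hG : ∀ x, 0 ≤ G x)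
    (h : ∃ x ∈ V, x < 0 ∧ 0 < G x) : 0 < ∑ x ∈ V with ¬0 < x, G x := by
  obtain ⟨n, hn, hn0, hGn⟩ := h
  exact hGn.trans_le (single_le_sum (fun x _ => hG x) (mem_filter.2 ⟨hn, hn0.not_gt⟩))

theorem welfare2_le_max {V : Finset ℝ} (hV0 : (0 : ℝ) ∉ V) {G1 G2 : ℝ → ℝ}
    (hG1 : (∀ x, 0 ≤ G1 x) ∧ ∑ x ∈ V, G1 x = 1) (hG2 : (∀ x, 0 ≤ G2 x) ∧ ∑ x ∈ V, G2 x = 1)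
    (hm1 : (∃ x ∈ V, 0 < x ∧ 0 < G1 x) ∧ (∃ x ∈ V, x < 0 ∧ 0 < G1 x))
    (hm2 : (∃ x ∈ V, 0 < x ∧ 0 < G2 x) ∧ (∃ x ∈ V, x < 0 ∧ 0 < G2 x))
    {f : ℝ → ℝ → ℝ} (hf : ∀ x y, 0 ≤ f x y ∧ f x y ≤ 1) (hsym : ∀ x y, f x y = f y x)
    (hBIC : BIC2 V G1 G2 f) :
    welfare2 V G1 G2 f ≤ max (welfare2 V G1 G2 qmr1) (welfare2 V G1 G2 qmr2) := by
  obtain ⟨p₁, hp₁, hp₁0, -⟩ := hm1.1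
  obtain ⟨n₁, hn₁, hn₁0, -⟩ := hm1.2
  obtain ⟨p₂, hp₂, hp₂0, -⟩ := hm2.1
  obtain ⟨n₂, hn₂, hn₂0, -⟩ := hm2.2
  have hA := constOnSigns_of_incentive hV0 hBIC.1 hp₁ hp₁0 hn₁ hn₁0
  have hB := constOnSigns_of_incentive hV0 hBIC.2 hp₂ hp₂0 hn₂ hn₂0
  have hA' : ConstOnSigns V (interim2 V G2 f) (interim1 V G2 f p₁) (interim1 V G2 f n₁) := by
    rwa [interim2_eq_interim1 hsym]
  have hB' : ConstOnSigns V (interim1 V G1 f) (interim2 V G1 f p₂) (interim2 V G1 f n₂) := by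
    rwa [← interim2_eq_interim1 hsym]
  have hf' : ∀ x y, 0 ≤ flip f x y ∧ flip f x y ≤ 1 := fun x y => hf y x
  rw [welfare2_eq_of_constOnSigns hA hB,
    welfare2_eq_of_constOnSigns (constOnSigns_interim1_qmr1 V G2)
      (interim2_eq_interim1 qmr1_comm G1 ▸ constOnSigns_interim1_qmr1 V G1),
    welfare2_eq_of_constOnSigns (constOnSigns_interim1_qmr2 V G2)
      (interim2_eq_interim1 qmr2_comm G1 ▸ constOnSigns_interim1_qmr2 V G1), hG1.2, hG2.2]
  simp only [mul_one, mul_zero, add_zero]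
  refine le_max_of_slack (sum_filter_pos_mul_self_nonneg V hG1.1)
    (sum_filter_not_pos_mul_self_nonpos V hG1.1) (sum_filter_pos_mul_self_nonneg V hG2.1)
    (sum_filter_not_pos_mul_self_nonpos V hG2.1)
    (sum_nonneg fun x _ => hG1.1 x) (sum_filter_not_pos_pos hG1.1 hm1.2)
    ((sum_filter_add_sum_filter_not V _ G1).trans hG1.2)
    (sum_nonneg fun x _ => hG2.1 x) (sum_filter_not_pos_pos hG2.1 hm2.2)
    ((sum_filter_add_sum_filter_not V _ G2).trans hG2.2)
    ((interim1_le_sum hG2.1 hf p₁).trans_eq hG2.2) (interim1_nonneg hG2.1 hf n₁)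
    ((interim1_le_sum hG1.1 hf' p₂).trans_eq hG1.2) (interim1_nonneg hG1.1 hf' n₂) ?_ ?_ ?_ ?_
  · exact mul_le_of_constOnSigns hG2.1 hG2.1 hf hA hA'
  · exact mul_le_of_constOnSigns hG1.1 hG1.1 hf' hB hB'
  · exact mul_le_of_constOnSigns hG1.1 hG2.1 hf hA hB
  · exact mul_le_of_constOnSigns hG2.1 hG1.1 hf' hB hA

/-- Theorem 1: with two agents, the maximal welfare over anonymous
BIC SCFs is attained by `f⁽¹⁾` or by `f⁽²⁾`. -/
theorem stmt10 (V : Finset ℝ) (hV0 : (0 : ℝ) ∉ V)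
    (G1 G2 : ℝ → ℝ)
    (hG1 : (∀ x, 0 ≤ G1 x) ∧ ∑ x ∈ V, G1 x = 1)
    (hG2 : (∀ x, 0 ≤ G2 x) ∧ ∑ x ∈ V, G2 x = 1)
    (hm1 : (∃ x ∈ V, 0 < x ∧ 0 < G1 x) ∧ (∃ x ∈ V, x < 0 ∧ 0 < G1 x))
    (hm2 : (∃ x ∈ V, 0 < x ∧ 0 < G2 x) ∧ (∃ x ∈ V, x < 0 ∧ 0 < G2 x)) :
    (∀ f : ℝ → ℝ → ℝ, (∀ x y, 0 ≤ f x y ∧ f x y ≤ 1) → (∀ x y, f x y = f y x) →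
      BIC2 V G1 G2 f → welfare2 V G1 G2 f ≤ welfare2 V G1 G2 qmr1) ∨
    (∀ f : ℝ → ℝ → ℝ, (∀ x y, 0 ≤ f x y ∧ f x y ≤ 1) → (∀ x y, f x y = f y x) →
      BIC2 V G1 G2 f → welfare2 V G1 G2 f ≤ welfare2 V G1 G2 qmr2) := by
  rcases le_total (welfare2 V G1 G2 qmr1) (welfare2 V G1 G2 qmr2) with h | h
  · exact Or.inr fun f hf hsym hBIC =>
      (welfare2_le_max hV0 hG1 hG2 hm1 hm2 hf hsym hBIC).trans_eq (max_eq_right h)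
  · exact Or.inl fun f hf hsym hBIC =>
      (welfare2_le_max hV0 hG1 hG2 hm1 hm2 hf hsym hBIC).trans_eq (max_eq_left h)
end

section
/- Let n = 3, V = {−100, −1, 1, 10}, with agents 1 and 2 having values uniform on {−100, 10} and agent 3 having values uniform on {−1, 1} (probability-zero on the other values). Define f* : V³ → [0,1] by f*(v) = 1 if all three values are positive, or if the multiset of values is {10, 10, −1}, {1, 1, −100}, or {−100, −100, −100}, and f*(v) = 0 otherwise. Then f* is anonymous and Bayesian incentive compatible: for agents 1 and 2, the interim probability of reform is 0 on reports −100 and −1, and 1/2 on reports 1 and 10; for agent 3, the interim probability of reform is 1/4 for every report. -/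
open Finset

/-- Value profiles: each agent reports an element of the finite value set `V`. -/
abbrev Pt (V : Finset ℝ) := {x : ℝ // x ∈ V}

/-- Expectation of `h` under independent value distributions `G i` on `V`. -/
noncomputable def expect {n : ℕ} (V : Finset ℝ) (G : Fin n → ℝ → ℝ)
    (h : (Fin n → ℝ) → ℝ) : ℝ :=
  ∑ w : Fin n → Pt V, (∏ i, G i (w i)) * h (fun i => (w i : ℝ))

/-- Interim expectation `E[f(v_i, ṽ₋ᵢ)]` when agent `i` reports `x`. -/
noncomputable def interim {n : ℕ} (V : Finset ℝ) (G : Fin n → ℝ → ℝ)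
    (f : (Fin n → ℝ) → ℝ) (i : Fin n) (x : ℝ) : ℝ :=
  expect V G (fun v => f (Function.update v i x))

/-- Bayesian incentive compatibility. -/
def BIC {n : ℕ} (V : Finset ℝ) (G : Fin n → ℝ → ℝ) (f : (Fin n → ℝ) → ℝ) : Prop :=
  ∀ i : Fin n, ∀ x ∈ V, ∀ y ∈ V, x * interim V G f i y ≤ x * interim V G f i x

/-- Anonymity: invariance under permutations of the reported values. -/
def Anonymous {n : ℕ} (f : (Fin n → ℝ) → ℝ) : Prop :=
  ∀ (π : Equiv.Perm (Fin n)) (v : Fin n → ℝ), f (fun i => v (π i)) = f v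

/-- Expected utilitarian welfare. -/
noncomputable def welfare {n : ℕ} (V : Finset ℝ) (G : Fin n → ℝ → ℝ)
    (f : (Fin n → ℝ) → ℝ) : ℝ :=
  expect V G (fun v => f v * ∑ i, v i)

/-- `g` is a probability distribution on `V`. -/
def IsDistrib (V : Finset ℝ) (g : ℝ → ℝ) : Prop :=
  (∀ x, 0 ≤ g x) ∧ ∑ x ∈ V, g x = 1

/-- `g` puts positive mass on at least one positive and one negative value of `V`. -/
def PosNegMass (V : Finset ℝ) (g : ℝ → ℝ) : Prop :=
  (∃ x ∈ V, 0 < x ∧ 0 < g x) ∧ (∃ x ∈ V, x < 0 ∧ 0 < g x)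

/-- The SCF takes values in `[0,1]`. -/
def InRange01 {n : ℕ} (f : (Fin n → ℝ) → ℝ) : Prop := ∀ v, 0 ≤ f v ∧ f v ≤ 1

/-- Number of agents preferring the reform. -/
noncomputable def posCount {n : ℕ} (v : Fin n → ℝ) : ℕ := (Finset.univ.filter fun i => 0 < v i).card

/-- Qualified majority rule with threshold `k`. -/
noncomputable def qmr {n : ℕ} (k : ℕ) (v : Fin n → ℝ) : ℝ :=
  if k ≤ posCount v then 1 else 0

/-- Multiset of reported values. -/
def mval {n : ℕ} (v : Fin n → ℝ) : Multiset ℝ := Multiset.map v Finset.univ.val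

/-- The value set `V = {-100, -1, 1, 10}`. -/
noncomputable def V3 : Finset ℝ := {-100, -1, 1, 10}

/-- Agents 1, 2 are uniform on `{10, -100}`; agent 3 is uniform on `{1, -1}`. -/
noncomputable def G3 : Fin 3 → ℝ → ℝ := fun i x =>
  if (i : ℕ) < 2 then (if x = 10 ∨ x = -100 then 1/2 else 0)
  else (if x = 1 ∨ x = -1 then 1/2 else 0)

/-- The cardinal rule `f*`. -/
noncomputable def fstar3 (v : Fin 3 → ℝ) : ℝ :=
  if (∀ i, 0 < v i) ∨ mval v = ({10, 10, -1} : Multiset ℝ) ∨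
      mval v = ({1, 1, -100} : Multiset ℝ) ∨
      mval v = ({-100, -100, -100} : Multiset ℝ) then 1 else 0

theorem pi3_sum (α : Type*) [Fintype α] (F : (Fin 3 → α) → ℝ) :
    ∑ w : Fin 3 → α, F w = ∑ a : α, ∑ b : α, ∑ c : α, F ![a,b,c] := by
  rw [← Equiv.sum_comp (Fin.consEquiv fun _ => α) F, Fintype.sum_prod_type]
  refine Finset.sum_congr rfl fun a _ => ?_
  rw [← Equiv.sum_comp (Fin.consEquiv fun _ => α)
      (fun w : Fin 2 → α => F ((Fin.consEquiv fun _ => α) (a, w))), Fintype.sum_prod_type]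
  refine Finset.sum_congr rfl fun b _ => ?_
  rw [← Equiv.sum_comp (Fin.consEquiv fun _ => α)
      (fun w : Fin 1 → α => F ((Fin.consEquiv fun _ => α) (a, (Fin.consEquiv fun _ => α) (b, w)))), Fintype.sum_prod_type]
  refine Finset.sum_congr rfl fun c _ => ?_
  rw [Fintype.sum_unique]
  congr 1

theorem expect3 (G : Fin 3 → ℝ → ℝ) (h : (Fin 3 → ℝ) → ℝ) :
    expect V3 G h = ∑ a ∈ V3, ∑ b ∈ V3, ∑ c ∈ V3,
      (G 0 a * G 1 b * G 2 c) * h ![a,b,c] := by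
  unfold _root_.expect
  rw [pi3_sum]
  rw [← Finset.sum_coe_sort V3 (fun a : ℝ => ∑ b ∈ V3, ∑ c ∈ V3, (G 0 a * G 1 b * G 2 c) * h ![a,b,c])]
  refine Finset.sum_congr rfl fun a _ => ?_
  rw [← Finset.sum_coe_sort V3 (fun b : ℝ => ∑ c ∈ V3, (G 0 a * G 1 b * G 2 c) * h ![(a:ℝ),b,c])]
  refine Finset.sum_congr rfl fun b _ => ?_
  rw [← Finset.sum_coe_sort V3 (fun c : ℝ => (G 0 a * G 1 b * G 2 c) * h ![(a:ℝ),(b:ℝ),c])]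
  refine Finset.sum_congr rfl fun c _ => ?_
  have hv : (fun i => ((![a,b,c] : Fin 3 → Pt V3) i : ℝ)) = ![(a:ℝ),(b:ℝ),(c:ℝ)] := by
    funext i; fin_cases i <;> rfl
  rw [Fin.prod_univ_three, hv]
  rfl

theorem sumV3 (g : ℝ → ℝ) : ∑ x ∈ V3, g x = g (-100) + g (-1) + g 1 + g 10 := by
  rw [V3]
  rw [Finset.sum_insert (by norm_num), Finset.sum_insert (by norm_num),
    Finset.sum_insert (by norm_num), Finset.sum_singleton]
  ring

theorem upd0 (a b c x : ℝ) : Function.update ![a,b,c] (0 : Fin 3) x = ![x,b,c] := by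
  funext i; fin_cases i <;> simp [Function.update]

theorem upd1 (a b c x : ℝ) : Function.update ![a,b,c] (1 : Fin 3) x = ![a,x,c] := by
  funext i; fin_cases i <;> simp [Function.update]

theorem upd2 (a b c x : ℝ) : Function.update ![a,b,c] (2 : Fin 3) x = ![a,b,x] := by
  funext i; fin_cases i <;> simp [Function.update]

theorem fstar3_eval (a b c : ℝ) : fstar3 ![a,b,c] =
    if ((0 < a ∧ 0 < b ∧ 0 < c) ∨ ({a,b,c} : Multiset ℝ) = {10,10,-1} ∨
      ({a,b,c} : Multiset ℝ) = {1,1,-100} ∨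
      ({a,b,c} : Multiset ℝ) = {-100,-100,-100}) then 1 else 0 := by
  have hm : mval ![a,b,c] = ({a,b,c} : Multiset ℝ) := rfl
  have hp : (∀ i, 0 < (![a,b,c] : Fin 3 → ℝ) i) ↔ (0 < a ∧ 0 < b ∧ 0 < c) := by
    constructor
    · intro h; exact ⟨h 0, h 1, h 2⟩
    · rintro ⟨h1, h2, h3⟩ i; fin_cases i <;> assumption
  rw [fstar3, hm]
  simp only [hp]

theorem interim0 (x : ℝ) : interim V3 G3 fstar3 0 x =
    (fstar3 ![x,-100,-1] + fstar3 ![x,-100,1] + fstar3 ![x,10,-1] + fstar3 ![x,10,1]) / 4 := by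
  rw [interim, expect3]
  simp only [sumV3, upd0]
  norm_num [G3]
  ring

theorem interim1_s11 (x : ℝ) : interim V3 G3 fstar3 1 x =
    (fstar3 ![-100,x,-1] + fstar3 ![-100,x,1] + fstar3 ![10,x,-1] + fstar3 ![10,x,1]) / 4 := by
  rw [interim, expect3]
  simp only [sumV3, upd1]
  norm_num [G3]
  ring

theorem interim2_s11 (x : ℝ) : interim V3 G3 fstar3 2 x =
    (fstar3 ![-100,-100,x] + fstar3 ![-100,10,x] + fstar3 ![10,-100,x] + fstar3 ![10,10,x]) / 4 := by
  rw [interim, expect3]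
  simp only [sumV3, upd2]
  norm_num [G3]
  ring

theorem iv0 : interim V3 G3 fstar3 0 (-100) = 0 ∧ interim V3 G3 fstar3 0 (-1) = 0 ∧
    interim V3 G3 fstar3 0 1 = 1/2 ∧ interim V3 G3 fstar3 0 10 = 1/2 := by
  refine ⟨?_, ?_, ?_, ?_⟩ <;>
    norm_num [interim0, fstar3_eval, Multiset.insert_eq_cons, Multiset.cons_eq_cons]

theorem iv1 : interim V3 G3 fstar3 1 (-100) = 0 ∧ interim V3 G3 fstar3 1 (-1) = 0 ∧
    interim V3 G3 fstar3 1 1 = 1/2 ∧ interim V3 G3 fstar3 1 10 = 1/2 := by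
  refine ⟨?_, ?_, ?_, ?_⟩ <;>
    norm_num [interim1_s11, fstar3_eval, Multiset.insert_eq_cons, Multiset.cons_eq_cons]

theorem iv2 : ∀ x ∈ V3, interim V3 G3 fstar3 2 x = 1/4 := by
  intro x hx
  rw [V3] at hx
  simp only [Finset.mem_insert, Finset.mem_singleton] at hx
  rcases hx with rfl | rfl | rfl | rfl <;>
    norm_num [interim2_s11, fstar3_eval, Multiset.insert_eq_cons, Multiset.cons_eq_cons]

theorem anon : Anonymous fstar3 := by
  intro π v
  have hm : mval (fun i => v (π i)) = mval v := by
    rw [mval, mval]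
    have : Multiset.map (fun i => v (π i)) Finset.univ.val
        = Multiset.map v (Multiset.map π Finset.univ.val) := by
      rw [Multiset.map_map]; rfl
    rw [this]
    congr 1
    have := Finset.map_univ_equiv π
    calc Multiset.map (⇑π) Finset.univ.val
        = (Finset.univ.map π.toEmbedding).val := rfl
      _ = Finset.univ.val := by rw [Finset.map_univ_equiv]
  have hp : (∀ i, 0 < v (π i)) ↔ (∀ i, 0 < v i) :=
    ⟨fun h i => by simpa using h (π.symm i), fun h i => h _⟩
  rw [fstar3, fstar3, hm]
  simp only [hp]

theorem bic : BIC V3 G3 fstar3 := by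
  intro i x hx y hy
  rw [V3] at hx hy
  simp only [Finset.mem_insert, Finset.mem_singleton] at hx hy
  fin_cases i
  · show x * interim V3 G3 fstar3 0 y ≤ x * interim V3 G3 fstar3 0 x
    obtain ⟨h1, h2, h3, h4⟩ := iv0
    rcases hx with rfl | rfl | rfl | rfl <;> rcases hy with rfl | rfl | rfl | rfl <;>
      simp only [h1, h2, h3, h4] <;> norm_num
  · show x * interim V3 G3 fstar3 1 y ≤ x * interim V3 G3 fstar3 1 x
    obtain ⟨h1, h2, h3, h4⟩ := iv1
    rcases hx with rfl | rfl | rfl | rfl <;> rcases hy with rfl | rfl | rfl | rfl <;>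
      simp only [h1, h2, h3, h4] <;> norm_num
  · show x * interim V3 G3 fstar3 2 y ≤ x * interim V3 G3 fstar3 2 x
    have h := iv2
    rw [h x (by rw [V3]; simp only [Finset.mem_insert, Finset.mem_singleton]; tauto),
        h y (by rw [V3]; simp only [Finset.mem_insert, Finset.mem_singleton]; tauto)]

/-- `f*` is anonymous and BIC, with interim reform probability `0`
on reports `-100, -1` and `1/2` on reports `1, 10` for agents 1 and 2, and `1/4`
on every report for agent 3. -/
theorem stmt11 :
    Anonymous fstar3 ∧ BIC V3 G3 fstar3 ∧
    (∀ i : Fin 3, (i : ℕ) < 2 →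
      interim V3 G3 fstar3 i (-100) = 0 ∧ interim V3 G3 fstar3 i (-1) = 0 ∧
      interim V3 G3 fstar3 i 1 = 1/2 ∧ interim V3 G3 fstar3 i 10 = 1/2) ∧
    (∀ x ∈ V3, interim V3 G3 fstar3 2 x = 1/4) := by
  refine ⟨anon, bic, ?_, iv2⟩
  intro i hi
  fin_cases i
  · exact iv0
  · exact iv1
  · norm_num at hi
end

section
/- In a symmetric environment (G_1 = ... = G_n with common positive-value probability p, U^+ = E[ṽ_1 | ṽ_1 > 0], U^- = E[|ṽ_1| | ṽ_1 < 0]), the qualified majority rule f^(k̄) with threshold k̄ = min{k : k > n·U^- /(U^+ + U^-)} maximizes expected welfare among all ordinal anonymous SCFs: conditional on exactly k agents preferring the reform, the expected total value is k·U^+ − (n−k)·U^-, which is positive iff k > n·U^- /(U^+ + U^-). -/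
open Finset

section helpers
open scoped Classical

lemma factor_aux {n : ℕ} (V : Finset ℝ) (F : Fin n → ℝ → ℝ) :
    ∑ w : Fin n → Pt V, ∏ j, F j (w j : ℝ) = ∏ j, ∑ x ∈ V, F j x := by
  rw [show (∏ j, ∑ x ∈ V, F j x) = ∏ j, ∑ x : Pt V, F j (x : ℝ) from
    Finset.prod_congr rfl fun j _ => (Finset.sum_coe_sort V (F j)).symm]
  rw [Finset.prod_univ_sum (fun _ => (Finset.univ : Finset (Pt V))) (fun j x => F j (x : ℝ)),
    Fintype.piFinset_univ]

lemma ind_split {n : ℕ} (V : Finset ℝ) (k : ℕ) (w : Fin n → Pt V) :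
    (if posCount (fun i => (w i : ℝ)) = k then (1 : ℝ) else 0)
      = ∑ A ∈ Finset.powersetCard k (Finset.univ : Finset (Fin n)),
          ∏ j, if (0 < (w j : ℝ) ↔ j ∈ A) then (1 : ℝ) else 0 := by
  have h1 : ∀ A : Finset (Fin n),
      (∏ j, if (0 < (w j : ℝ) ↔ j ∈ A) then (1 : ℝ) else 0)
        = if (Finset.univ.filter fun j => 0 < (w j : ℝ)) = A then 1 else 0 := by
    intro A
    by_cases h : (Finset.univ.filter fun j => 0 < (w j : ℝ)) = A
    · rw [if_pos h]
      apply Finset.prod_eq_one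
      intro j _
      rw [if_pos]
      rw [← h]
      simp
    · rw [if_neg h]
      have : ¬ ∀ j : Fin n, (0 < (w j : ℝ) ↔ j ∈ A) := by
        intro hall
        apply h
        ext j
        simp [hall j]
      obtain ⟨j, hj⟩ := not_forall.1 this
      exact Finset.prod_eq_zero (Finset.mem_univ j) (if_neg hj)
  rw [Finset.sum_congr rfl fun A _ => h1 A, Finset.sum_ite_eq]
  refine if_congr ?_ rfl rfl
  simp [Finset.mem_powersetCard, posCount]

end helpers

/-- Proposition 1: in a symmetric environment, the qualified
majority rule with threshold `k̄ = min{k : k > n·U⁻/(U⁺+U⁻)}` maximizes welfare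
among ordinal anonymous SCFs; conditional on exactly `k` agents preferring the
reform the expected total value is `k·U⁺ − (n−k)·U⁻`, which is positive iff
`k > n·U⁻/(U⁺+U⁻)`. -/
theorem stmt19 {n : ℕ} (V : Finset ℝ) (hV0 : (0 : ℝ) ∉ V)
    (G0 : ℝ → ℝ) (hG : IsDistrib V G0) (hm : PosNegMass V G0)
    (p Up Um : ℝ)
    (hp : p = ∑ x ∈ V.filter (fun x => 0 < x), G0 x)
    (hUp : Up = (∑ x ∈ V.filter (fun x => 0 < x), x * G0 x) / p)
    (hUm : Um = (∑ x ∈ V.filter (fun x => x < 0), (-x) * G0 x) / (1 - p))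
    (kbar : ℕ)
    (hk1 : (n : ℝ) * Um / (Up + Um) < (kbar : ℝ))
    (hk2 : ∀ k : ℕ, (n : ℝ) * Um / (Up + Um) < (k : ℝ) → kbar ≤ k) :
    (∀ k : ℕ, k ≤ n →
      expect (n := n) V (fun _ => G0) (fun v => (if posCount v = k then 1 else 0) * ∑ i, v i) =
        expect (n := n) V (fun _ => G0) (fun v => if posCount v = k then 1 else 0) *
          ((k : ℝ) * Up - ((n : ℝ) - (k : ℝ)) * Um)) ∧
    (∀ k : ℕ, k ≤ n →
      (0 < (k : ℝ) * Up - ((n : ℝ) - (k : ℝ)) * Um ↔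
        (n : ℝ) * Um / (Up + Um) < (k : ℝ))) ∧
    (∀ g : ℕ → ℝ, (∀ k, 0 ≤ g k ∧ g k ≤ 1) →
      welfare (n := n) V (fun _ => G0) (fun v => g (posCount v)) ≤
        welfare (n := n) V (fun _ => G0) (qmr (n := n) kbar)) := by

  classical
  obtain ⟨hGnn, hGsum⟩ := hG
  obtain ⟨⟨a, haV, ha0, haG⟩, b, hbV, hb0, hbG⟩ := hm
  set q : ℝ := ∑ x ∈ V.filter (fun x => x < 0), G0 x with hq
  have hsign : ∀ x ∈ V, (¬ (0:ℝ) < x ↔ x < 0) := by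
    intro x hx
    have hne : x ≠ 0 := fun h => hV0 (h ▸ hx)
    constructor
    · intro h; exact (lt_or_gt_of_ne hne).resolve_right h
    · intro h h'; exact absurd h (not_lt.2 h'.le)
  have hpq : p + q = 1 := by
    have hsplit := Finset.sum_filter_add_sum_filter_not V (fun x => 0 < x) G0
    have hfe : V.filter (fun x => ¬ 0 < x) = V.filter (fun x => x < 0) :=
      Finset.filter_congr fun x hx => hsign x hx
    rw [hfe, hGsum] at hsplit
    rw [hp, hq]
    exact hsplit
  have hp0 : 0 < p := by
    rw [hp]
    exact lt_of_lt_of_le haG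
      (Finset.single_le_sum (fun x _ => hGnn x) (Finset.mem_filter.2 ⟨haV, ha0⟩))
  have hq0 : 0 < q := by
    rw [hq]
    exact lt_of_lt_of_le hbG
      (Finset.single_le_sum (fun x _ => hGnn x) (Finset.mem_filter.2 ⟨hbV, hb0⟩))
  have hq_eq : q = 1 - p := by linarith
  have hSp0 : 0 < ∑ x ∈ V.filter (fun x => 0 < x), x * G0 x := by
    refine lt_of_lt_of_le (mul_pos ha0 haG) (Finset.single_le_sum (f := fun x => x * G0 x) ?_
      (Finset.mem_filter.2 ⟨haV, ha0⟩))
    intro x hx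
    exact mul_nonneg (Finset.mem_filter.1 hx).2.le (hGnn x)
  have hSm0 : 0 < ∑ x ∈ V.filter (fun x => x < 0), (-x) * G0 x := by
    refine lt_of_lt_of_le (mul_pos (by linarith : (0:ℝ) < -b) hbG)
      (Finset.single_le_sum (f := fun x => (-x) * G0 x) ?_
        (Finset.mem_filter.2 ⟨hbV, hb0⟩))
    intro x hx
    exact mul_nonneg (by linarith [(Finset.mem_filter.1 hx).2] : (0:ℝ) ≤ -x) (hGnn x)
  have hUp0 : 0 < Up := hUp ▸ div_pos hSp0 hp0
  have hUm0 : 0 < Um := hUm ▸ div_pos hSm0 (by linarith : (0:ℝ) < 1 - p)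
  have hUpUm : 0 < Up + Um := by linarith
  have hSpP : ∑ x ∈ V.filter (fun x => 0 < x), G0 x * x = p * Up := by
    have h1 : ∑ x ∈ V.filter (fun x => 0 < x), G0 x * x
        = ∑ x ∈ V.filter (fun x => 0 < x), x * G0 x :=
      Finset.sum_congr rfl fun x _ => mul_comm _ _
    rw [h1, hUp, mul_comm, div_mul_cancel₀ _ hp0.ne']
  have hSmQ : ∑ x ∈ V.filter (fun x => x < 0), G0 x * x = q * (-Um) := by
    have h1 : ∑ x ∈ V.filter (fun x => x < 0), G0 x * x
        = -∑ x ∈ V.filter (fun x => x < 0), (-x) * G0 x := by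
      rw [← Finset.sum_neg_distrib]
      exact Finset.sum_congr rfl fun x _ => by ring
    rw [h1, hUm, hq_eq, mul_neg, mul_comm, div_mul_cancel₀ _ (by linarith : (1:ℝ) - p ≠ 0)]
  -- per-coordinate evaluations
  have hcoord1 : ∀ (A : Finset (Fin n)) (j : Fin n),
      (∑ x ∈ V, G0 x * if (0 < x ↔ j ∈ A) then (1:ℝ) else 0) = if j ∈ A then p else q := by
    intro A j
    by_cases hj : j ∈ A
    · rw [if_pos hj, hp, Finset.sum_filter]
      refine Finset.sum_congr rfl fun x hx => ?_
      by_cases h0 : (0:ℝ) < x <;> simp [h0, hj]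
    · rw [if_neg hj, hq, Finset.sum_filter]
      refine Finset.sum_congr rfl fun x hx => ?_
      by_cases h0 : (0:ℝ) < x
      · simp [h0, hj, not_lt.2 h0.le]
      · simp [h0, hj, (hsign x hx).1 h0]
  have hcoord2 : ∀ (A : Finset (Fin n)) (i j : Fin n),
      (∑ x ∈ V, G0 x * (if (0 < x ↔ j ∈ A) then (1:ℝ) else 0) * (if j = i then x else 1))
        = (if j ∈ A then p else q) * (if j = i then (if j ∈ A then Up else -Um) else 1) := by
    intro A i j
    by_cases hji : j = i
    · simp only [if_pos hji]
      by_cases hj : j ∈ A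
      · simp only [if_pos hj]
        rw [← hSpP, Finset.sum_filter]
        refine Finset.sum_congr rfl fun x hx => ?_
        by_cases h0 : (0:ℝ) < x <;> simp [h0, hj]
      · simp only [if_neg hj]
        rw [← hSmQ, Finset.sum_filter]
        refine Finset.sum_congr rfl fun x hx => ?_
        by_cases h0 : (0:ℝ) < x
        · simp [h0, hj, not_lt.2 h0.le]
        · simp [h0, hj, (hsign x hx).1 h0]
    · simp only [if_neg hji, mul_one]
      exact hcoord1 A j
  -- sum of r over agents
  have hsumr : ∀ k : ℕ, ∀ A ∈ Finset.powersetCard k (Finset.univ : Finset (Fin n)),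
      (∑ i : Fin n, (if i ∈ A then Up else -Um)) = (k:ℝ) * Up - ((n:ℝ) - (k:ℝ)) * Um := by
    intro k A hA
    obtain ⟨-, hcard⟩ := Finset.mem_powersetCard.1 hA
    have h1 : ∀ i : Fin n, (if i ∈ A then Up else -Um)
        = (if i ∈ A then (1:ℝ) else 0) * (Up + Um) - Um := by
      intro i; by_cases h : i ∈ A <;> simp [h]
    rw [Finset.sum_congr rfl fun i _ => h1 i, Finset.sum_sub_distrib, Finset.sum_const,
      ← Finset.sum_mul, Finset.sum_boole]
    have h2 : (Finset.univ.filter fun i => i ∈ A) = A := by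
      ext i; simp
    rw [h2, hcard]
    simp [Finset.card_univ]
    ring
  -- the two key expectation identities
  have keyP : ∀ k : ℕ,
      _root_.expect (n := n) V (fun _ => G0) (fun v => if posCount v = k then 1 else 0)
        = ∑ A ∈ Finset.powersetCard k (Finset.univ : Finset (Fin n)),
            ∏ j, (if j ∈ A then p else q) := by
    intro k
    have e1 : _root_.expect (n := n) V (fun _ => G0) (fun v => if posCount v = k then 1 else 0)
        = ∑ w : Fin n → Pt V, ∑ A ∈ Finset.powersetCard k (Finset.univ : Finset (Fin n)),
            ∏ j, (G0 (w j : ℝ) * if (0 < (w j : ℝ) ↔ j ∈ A) then (1:ℝ) else 0) := by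
      show (∑ w : Fin n → Pt V, (∏ i, G0 (w i : ℝ)) *
          (if posCount (fun i => (w i : ℝ)) = k then (1:ℝ) else 0)) = _
      refine Finset.sum_congr rfl fun w _ => ?_
      rw [ind_split V k w, Finset.mul_sum]
      exact Finset.sum_congr rfl fun A _ => (Finset.prod_mul_distrib).symm
    rw [e1, Finset.sum_comm]
    refine Finset.sum_congr rfl fun A _ => ?_
    rw [factor_aux V (fun j x => G0 x * if (0 < x ↔ j ∈ A) then (1:ℝ) else 0)]
    exact Finset.prod_congr rfl fun j _ => hcoord1 A j
  have key0 : ∀ k : ℕ,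
      _root_.expect (n := n) V (fun _ => G0) (fun v => (if posCount v = k then 1 else 0) * ∑ i, v i)
        = (∑ A ∈ Finset.powersetCard k (Finset.univ : Finset (Fin n)),
            ∏ j, (if j ∈ A then p else q)) * ((k:ℝ) * Up - ((n:ℝ) - (k:ℝ)) * Um) := by
    intro k
    have e1 : _root_.expect (n := n) V (fun _ => G0)
          (fun v => (if posCount v = k then 1 else 0) * ∑ i, v i)
        = ∑ w : Fin n → Pt V, ∑ A ∈ Finset.powersetCard k (Finset.univ : Finset (Fin n)),
            ∑ i : Fin n, ∏ j, (G0 (w j : ℝ) * (if (0 < (w j : ℝ) ↔ j ∈ A) then (1:ℝ) else 0)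
              * (if j = i then (w j : ℝ) else 1)) := by
      show (∑ w : Fin n → Pt V, (∏ i, G0 (w i : ℝ)) *
          ((if posCount (fun i => (w i : ℝ)) = k then (1:ℝ) else 0) * ∑ i, (w i : ℝ))) = _
      refine Finset.sum_congr rfl fun w _ => ?_
      rw [ind_split V k w, Finset.sum_mul, Finset.mul_sum]
      refine Finset.sum_congr rfl fun A _ => ?_
      rw [Finset.mul_sum, Finset.mul_sum]
      refine Finset.sum_congr rfl fun i _ => ?_
      rw [Finset.prod_mul_distrib, Finset.prod_mul_distrib, Finset.prod_ite_eq',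
        if_pos (Finset.mem_univ i)]
      ring
    rw [e1, Finset.sum_comm]
    rw [show (∑ A ∈ Finset.powersetCard k (Finset.univ : Finset (Fin n)),
            ∏ j, (if j ∈ A then p else q)) * ((k:ℝ) * Up - ((n:ℝ) - (k:ℝ)) * Um)
        = ∑ A ∈ Finset.powersetCard k (Finset.univ : Finset (Fin n)),
            (∏ j, (if j ∈ A then p else q)) * ((k:ℝ) * Up - ((n:ℝ) - (k:ℝ)) * Um) from
      Finset.sum_mul _ _ _]
    refine Finset.sum_congr rfl fun A hA => ?_
    have e2 : ∀ i : Fin n,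
        (∑ w : Fin n → Pt V, ∏ j, (G0 (w j : ℝ) * (if (0 < (w j : ℝ) ↔ j ∈ A) then (1:ℝ) else 0)
            * (if j = i then (w j : ℝ) else 1)))
          = (∏ j, (if j ∈ A then p else q)) * (if i ∈ A then Up else -Um) := by
      intro i
      rw [factor_aux V (fun j x => G0 x * (if (0 < x ↔ j ∈ A) then (1:ℝ) else 0)
        * (if j = i then x else 1))]
      rw [Finset.prod_congr rfl fun j _ => hcoord2 A i j, Finset.prod_mul_distrib,
        Finset.prod_ite_eq', if_pos (Finset.mem_univ i)]
    rw [Finset.sum_comm, Finset.sum_congr rfl fun i (_ : i ∈ Finset.univ) => e2 i,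
      ← Finset.mul_sum, hsumr k A hA]
  -- positivity iff
  have hiff : ∀ k : ℕ, (0 < (k:ℝ) * Up - ((n:ℝ) - (k:ℝ)) * Um ↔
      (n:ℝ) * Um / (Up + Um) < (k:ℝ)) := by
    intro k
    rw [div_lt_iff₀ hUpUm]
    constructor <;> intro h <;> nlinarith
  -- nonnegativity of the masses
  have hQ0 : ∀ k : ℕ, 0 ≤ ∑ A ∈ Finset.powersetCard k (Finset.univ : Finset (Fin n)),
      ∏ j, (if j ∈ A then p else q) := by
    intro k
    refine Finset.sum_nonneg fun A _ => Finset.prod_nonneg fun j _ => ?_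
    by_cases h : j ∈ A <;> simp [h, hp0.le, hq0.le]
  -- decomposition of welfare
  have hFsplit : ∀ (v : Fin n → ℝ) (F : ℕ → ℝ),
      F (posCount v) = ∑ k ∈ Finset.range (n+1), F k * (if posCount v = k then 1 else 0) := by
    intro v F
    have hle : posCount v ≤ n := by
      have := Finset.card_filter_le (Finset.univ : Finset (Fin n)) (fun i => 0 < v i)
      simpa [posCount, Finset.card_univ] using this
    have hmem : posCount v ∈ Finset.range (n+1) := Finset.mem_range.2 (Nat.lt_succ_of_le hle)
    rw [show (∑ k ∈ Finset.range (n+1), F k * (if posCount v = k then 1 else 0))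
        = ∑ k ∈ Finset.range (n+1), if posCount v = k then F k else 0 from
      Finset.sum_congr rfl fun k _ => by by_cases h' : posCount v = k <;> simp [h']]
    rw [Finset.sum_ite_eq _ _ F, if_pos hmem]
  have hdec : ∀ F : ℕ → ℝ,
      welfare (n := n) V (fun _ => G0) (fun v => F (posCount v))
        = ∑ k ∈ Finset.range (n+1), F k *
            _root_.expect (n := n) V (fun _ => G0)
              (fun v => (if posCount v = k then 1 else 0) * ∑ i, v i) := by
    intro F
    show (∑ w : Fin n → Pt V, (∏ i, G0 (w i : ℝ)) *
        (F (posCount (fun i => (w i : ℝ))) * ∑ i, (w i : ℝ))) = _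
    rw [show (∑ w : Fin n → Pt V, (∏ i, G0 (w i : ℝ)) *
          (F (posCount (fun i => (w i : ℝ))) * ∑ i, (w i : ℝ)))
        = ∑ w : Fin n → Pt V, ∑ k ∈ Finset.range (n+1),
            F k * ((∏ i, G0 (w i : ℝ)) *
              ((if posCount (fun i => (w i : ℝ)) = k then (1:ℝ) else 0) * ∑ i, (w i : ℝ))) from
      Finset.sum_congr rfl fun w _ => by
        rw [hFsplit (fun i => (w i : ℝ)) F, Finset.sum_mul, Finset.mul_sum]
        exact Finset.sum_congr rfl fun k _ => by ring]
    rw [Finset.sum_comm]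
    exact Finset.sum_congr rfl fun k _ => (Finset.mul_sum _ _ _).symm
  refine ⟨fun k _ => by rw [key0 k, keyP k], fun k _ => hiff k, ?_⟩
  intro g hg
  have hqmr : qmr (n := n) kbar = fun v => (fun m => if kbar ≤ m then (1:ℝ) else 0) (posCount v) :=
    rfl
  rw [hdec g, hqmr, hdec (fun m => if kbar ≤ m then (1:ℝ) else 0)]
  refine Finset.sum_le_sum fun k _ => ?_
  rw [key0 k]
  set Q : ℝ := ∑ A ∈ Finset.powersetCard k (Finset.univ : Finset (Fin n)),
    ∏ j, (if j ∈ A then p else q) with hQdef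
  set c : ℝ := (k:ℝ) * Up - ((n:ℝ) - (k:ℝ)) * Um with hcdef
  have hQ : 0 ≤ Q := hQ0 k
  by_cases hkb : kbar ≤ k
  · have hc : 0 < c := (hiff k).2 (lt_of_lt_of_le hk1 (Nat.cast_le.2 hkb))
    rw [if_pos hkb]
    have hgk := (hg k).2
    nlinarith [mul_nonneg hQ hc.le]
  · have hc : c ≤ 0 := by
      by_contra h
      push_neg at h
      exact hkb (hk2 k ((hiff k).1 h))
    rw [if_neg hkb, zero_mul]
    have hgk := (hg k).1
    nlinarith [mul_nonpos_of_nonneg_of_nonpos hQ hc]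
end
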